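/- For every permutation π ∈ S_n: L(π) ≤ S(π) ≤ 4·M_φ(π). -/

import Mathlib

/-!
Write `Ψ(ρ) = Σᵢ φ*(i, ρ i)`. Since `swap x b` is the conjugate of `swap x a` by `swap a b`,
subadditivity of `M_φ` gives `φ*(x, b) ≤ φ*(x, a) + 2 φ*(a, b)`; hence multiplying by a
transposition `(a b)` changes only two terms of `Ψ` and raises it by at most
`4 φ*(a, b) ≤ 4 φ(a, b)`. Starting from `Ψ(1) = 0`, every decomposition of `π` thus costs at least
`Ψ(π) / 4`, and `Ψ(π) ≥ S(π)` because each cycle `σ` of `π` contributes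
`Σ_{i ∈ supp σ} φ*(i, σ i)`.

Conversely a cycle `σ` is the product of the transpositions `(i, σ i)` over all points of its
support but one. Leaving out the point whose step is the most expensive gives a decomposition of
`σ` into `|supp σ| - 1` transpositions of `φ*`-cost `S(σ)`; concatenating these over the cycles
of `π` gives `n - c(π)` transpositions of cost `S(π)`.
-/

variable {n : ℕ}

/-- The minimum `φ`-cost over all transposition decompositions of `π`. -/
noncomputable def Mcost (φ : Fin n → Fin n → ℝ) (π : Equiv.Perm (Fin n)) : ℝ :=
  sInf {c : ℝ | ∃ l : List (Fin n × Fin n), (∀ p ∈ l, p.1 ≠ p.2) ∧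
    (l.map fun p => Equiv.swap p.1 p.2).prod = π ∧
    (l.map fun p => φ p.1 p.2).sum = c}

/-- The optimized cost `φ*(a,b) = M_φ(swap a b)` for `a ≠ b`, and `φ*(a,a) = 0`. -/
noncomputable def optCost (φ : Fin n → Fin n → ℝ) (a b : Fin n) : ℝ :=
  if a = b then 0 else Mcost φ (Equiv.swap a b)

/-- The minimum `ψ`-cost over all transposition decompositions of `π` consisting of
exactly `m` transpositions. -/
noncomputable def Lcost (ψ : Fin n → Fin n → ℝ) (m : ℕ) (π : Equiv.Perm (Fin n)) : ℝ :=
  sInf {c : ℝ | ∃ l : List (Fin n × Fin n), (∀ p ∈ l, p.1 ≠ p.2) ∧ l.length = m ∧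
    (l.map fun p => Equiv.swap p.1 p.2).prod = π ∧
    (l.map fun p => ψ p.1 p.2).sum = c}

/-- `c(π)`: the number of cycles of `π` acting on `Fin n`, fixed points counted as
cycles of length one (= number of nontrivial cycles + number of fixed points). -/
noncomputable def cNum (π : Equiv.Perm (Fin n)) : ℕ :=
  π.cycleFactorsFinset.card + (n - π.support.card)

/-- `S(σ) = Σ_{i ∈ supp σ} φ*(i, σ i) − max_{i ∈ supp σ} φ*(i, σ i)` for a cycle `σ`. -/
noncomputable def Scost (φ : Fin n → Fin n → ℝ) (σ : Equiv.Perm (Fin n)) : ℝ :=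
  (∑ i ∈ σ.support, optCost φ i (σ i)) -
    sSup ((fun i => optCost φ i (σ i)) '' (↑σ.support : Set (Fin n)))

/-- `S(π) = Σ_t S(σ_t)`, the sum over the nontrivial cycles `σ_t` of `π`. -/
noncomputable def Sperm (φ : Fin n → Fin n → ℝ) (π : Equiv.Perm (Fin n)) : ℝ :=
  ∑ σ ∈ π.cycleFactorsFinset, Scost φ σ

open Finset Equiv Equiv.Perm

section Decompositions

variable {α : Type*}

def swapCost (ψ : α → α → ℝ) (l : List (α × α)) : ℝ := (l.map fun p => ψ p.1 p.2).sum

theorem swapCost_nil (ψ : α → α → ℝ) : swapCost ψ [] = 0 := rfl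

theorem swapCost_cons (ψ : α → α → ℝ) (p : α × α) (l : List (α × α)) :
    swapCost ψ (p :: l) = ψ p.1 p.2 + swapCost ψ l := List.sum_cons

theorem swapCost_append (ψ : α → α → ℝ) (l₁ l₂ : List (α × α)) :
    swapCost ψ (l₁ ++ l₂) = swapCost ψ l₁ + swapCost ψ l₂ := by
  simp only [swapCost, List.map_append, List.sum_append]

theorem swapCost_nonneg {ψ : α → α → ℝ} {l : List (α × α)} (h : ∀ p ∈ l, 0 ≤ ψ p.1 p.2) :
    0 ≤ swapCost ψ l :=
  List.sum_nonneg <| List.forall_mem_map.2 h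

variable [DecidableEq α]

def swapProd (l : List (α × α)) : Perm α := (l.map fun p => swap p.1 p.2).prod

theorem swapProd_nil : swapProd ([] : List (α × α)) = 1 := rfl

theorem swapProd_cons (p : α × α) (l : List (α × α)) :
    swapProd (p :: l) = swap p.1 p.2 * swapProd l := List.prod_cons

theorem swapProd_append (l₁ l₂ : List (α × α)) :
    swapProd (l₁ ++ l₂) = swapProd l₁ * swapProd l₂ := by
  simp only [swapProd, List.map_append, List.prod_append]

theorem exists_swapProd_eq [Finite α] (π : Perm α) :
    ∃ l : List (α × α), (∀ p ∈ l, p.1 ≠ p.2) ∧ swapProd l = π := by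
  induction π using swap_induction_on with
  | one => exact ⟨[], by simp, rfl⟩
  | swap_mul f x y hxy ih =>
    obtain ⟨l, hl, rfl⟩ := ih
    exact ⟨(x, y) :: l, List.forall_mem_cons.2 ⟨hxy, hl⟩, rfl⟩

end Decompositions

namespace Equiv.Perm

variable {α : Type*} [DecidableEq α]

theorem IsCycle.exists_list_prod_swap_apply_eq [Fintype α] {σ : Perm α} (hσ : σ.IsCycle)
    {x : α} (hx : x ∈ σ.support) :
    ∃ l : List α, l.Nodup ∧ l.toFinset = σ.support.erase x ∧
      (l.map fun i => swap i (σ i)).prod = σ := by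
  induction h : #σ.support using Nat.strong_induction_on generalizing σ with
  | _ k ih =>
  set y := σ x with hy
  have hyx : y ≠ x := mem_support.1 hx
  by_cases hσy : σ y = x
  · have hσswap : σ = swap x y := hσ.eq_swap_of_apply_apply_eq_self hyx hσy
    refine ⟨[y], List.nodup_singleton y, ?_, ?_⟩
    · rw [hσswap, support_swap hyx.symm, erase_insert_eq_erase,
        erase_eq_of_notMem (notMem_singleton.2 hyx.symm)]
      rfl
    · rw [List.map_singleton, List.prod_singleton, hσy, swap_comm, ← hσswap]
  · have hσy' : σ y ≠ y := fun h => hyx (σ.injective h)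
    have hσσy : σ (σ y) ≠ y := fun h => hσy (σ.injective h)
    -- `τ` is `σ` with the point `y` cut out of the cycle; `x` stays in its support.
    set τ := swap y (σ y) * σ with hτ
    have hτsupp : τ.support = σ.support.erase y := by
      rw [hτ, support_swap_mul_eq σ y hσσy, sdiff_singleton_eq_erase]
    have hτx : τ x = σ y := by rw [hτ, mul_apply, ← hy, swap_apply_left]
    have hxτ : x ∈ τ.support := mem_support.2 (hτx ▸ hσy)
    obtain ⟨l, hnd, hset, hprod⟩ :=
      ih _ (h ▸ card_support_swap_mul hσy') (hσ.swap_mul hσy' hσσy) hxτ rfl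
    have hl : ∀ i ∈ l, i ≠ x ∧ i ≠ y := by
      intro i hi
      rw [← List.mem_toFinset, hset, hτsupp] at hi
      simp only [mem_erase] at hi
      exact ⟨hi.1, hi.2.1⟩
    have hagree : ∀ i ∈ l, τ i = σ i := fun i hi =>
      swap_apply_of_ne_of_ne (fun h => (hl i hi).1 (σ.injective h))
        (fun h => (hl i hi).2 (σ.injective h))
    refine ⟨y :: l, List.nodup_cons.2 ⟨fun hy => (hl y hy).2 rfl, hnd⟩, ?_, ?_⟩
    · rw [List.toFinset_cons, hset, hτsupp, erase_right_comm,
        insert_erase (mem_erase.2 ⟨hyx, apply_mem_support.2 hx⟩)]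
    · rw [List.map_cons, List.prod_cons,
        List.map_congr_left fun i hi => congrArg (swap i) (hagree i hi).symm, hprod,
        swap_mul_self_mul]

end Equiv.Perm

section Costs

variable {φ : Fin n → Fin n → ℝ}

theorem swapCost_nonneg_of_ne (hnn : ∀ a b : Fin n, a ≠ b → 0 ≤ φ a b)
    {l : List (Fin n × Fin n)} (hl : ∀ p ∈ l, p.1 ≠ p.2) : 0 ≤ swapCost φ l :=
  swapCost_nonneg fun p hp => hnn _ _ (hl p hp)

theorem Mcost_le_swapCost (hnn : ∀ a b : Fin n, a ≠ b → 0 ≤ φ a b)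
    {l : List (Fin n × Fin n)} (hl : ∀ p ∈ l, p.1 ≠ p.2) : Mcost φ (swapProd l) ≤ swapCost φ l :=
  csInf_le ⟨0, by rintro _ ⟨l', hl', -, rfl⟩; exact swapCost_nonneg_of_ne hnn hl'⟩ ⟨l, hl, rfl, rfl⟩

theorem le_Mcost {c : ℝ} {π : Perm (Fin n)}
    (h : ∀ l, (∀ p ∈ l, p.1 ≠ p.2) → swapProd l = π → c ≤ swapCost φ l) : c ≤ Mcost φ π := by
  obtain ⟨l, hl, hπ⟩ := exists_swapProd_eq π
  exact le_csInf ⟨_, l, hl, hπ, rfl⟩ fun _ ⟨l, hl, hπ, hc⟩ => hc ▸ h l hl hπ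

theorem Mcost_nonneg (hnn : ∀ a b : Fin n, a ≠ b → 0 ≤ φ a b) (π : Perm (Fin n)) :
    0 ≤ Mcost φ π :=
  le_Mcost fun _ hl _ => swapCost_nonneg_of_ne hnn hl

theorem Mcost_mul_le (hnn : ∀ a b : Fin n, a ≠ b → 0 ≤ φ a b) (σ τ : Perm (Fin n)) :
    Mcost φ (σ * τ) ≤ Mcost φ σ + Mcost φ τ := by
  have hconcat : ∀ l₁ l₂ : List (Fin n × Fin n), (∀ p ∈ l₁, p.1 ≠ p.2) → (∀ p ∈ l₂, p.1 ≠ p.2) →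
      swapProd l₁ = σ → swapProd l₂ = τ → Mcost φ (σ * τ) ≤ swapCost φ l₁ + swapCost φ l₂ := by
    rintro l₁ l₂ h₁ h₂ rfl rfl
    rw [← swapProd_append, ← swapCost_append]
    exact Mcost_le_swapCost hnn (List.forall_mem_append.2 ⟨h₁, h₂⟩)
  have : Mcost φ (σ * τ) - Mcost φ τ ≤ Mcost φ σ := le_Mcost fun l₁ h₁ hσ =>
    sub_le_comm.1 <| le_Mcost fun l₂ h₂ hτ => sub_le_iff_le_add'.2 (hconcat l₁ l₂ h₁ h₂ hσ hτ)
  linarith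

theorem optCost_self (a : Fin n) : optCost φ a a = 0 := if_pos rfl

theorem optCost_of_ne {a b : Fin n} (hab : a ≠ b) : optCost φ a b = Mcost φ (swap a b) :=
  if_neg hab

theorem optCost_comm (a b : Fin n) : optCost φ a b = optCost φ b a := by
  rcases eq_or_ne a b with rfl | hab
  · rfl
  · rw [optCost_of_ne hab, optCost_of_ne hab.symm, swap_comm]

theorem optCost_nonneg (hnn : ∀ a b : Fin n, a ≠ b → 0 ≤ φ a b) (a b : Fin n) :
    0 ≤ optCost φ a b := by
  rcases eq_or_ne a b with rfl | hab
  · exact (optCost_self a).ge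
  · exact (optCost_of_ne hab).symm ▸ Mcost_nonneg hnn _

theorem optCost_le (hnn : ∀ a b : Fin n, a ≠ b → 0 ≤ φ a b) {a b : Fin n} (hab : a ≠ b) :
    optCost φ a b ≤ φ a b := by
  simpa [optCost_of_ne hab, swapProd, swapCost] using
    Mcost_le_swapCost hnn (l := [(a, b)]) (by simpa using hab)

-- `swap x b` is the conjugate of `swap x a` by `swap a b`.
theorem optCost_le_add (hnn : ∀ a b : Fin n, a ≠ b → 0 ≤ φ a b) (x a b : Fin n) :
    optCost φ x b ≤ optCost φ x a + 2 * optCost φ a b := by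
  have hxa₀ := optCost_nonneg hnn x a
  have hab₀ := optCost_nonneg hnn a b
  rcases eq_or_ne x b with rfl | hxb
  · rw [optCost_self]
    positivity
  rcases eq_or_ne x a with rfl | hxa
  · rw [optCost_self]
    linarith
  rcases eq_or_ne a b with rfl | hab
  · rw [optCost_self]
    linarith
  rw [optCost_of_ne hxb, optCost_of_ne hxa, optCost_of_ne hab, swap_comm x b,
    ← swap_mul_swap_mul_swap hxa hxb]
  linarith [Mcost_mul_le hnn (swap a b * swap x a) (swap a b),
    Mcost_mul_le hnn (swap a b) (swap x a)]

end Costs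

noncomputable def displacementCost (φ : Fin n → Fin n → ℝ) (ρ : Perm (Fin n)) : ℝ :=
  ∑ i, optCost φ i (ρ i)

section Displacement

variable {φ : Fin n → Fin n → ℝ}

theorem displacementCost_mul_of_disjoint {σ τ : Perm (Fin n)} (h : Disjoint σ τ) :
    displacementCost φ (σ * τ) = displacementCost φ σ + displacementCost φ τ := by
  rw [displacementCost, displacementCost, displacementCost, ← Finset.sum_add_distrib]
  refine Finset.sum_congr rfl fun i _ => ?_
  rcases h i with hσ | hτ
  · rw [h.commute.eq, mul_apply, hσ, optCost_self, zero_add]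
  · rw [mul_apply, hτ, optCost_self, add_zero]

theorem optCost_swap_apply_le (hnn : ∀ a b : Fin n, a ≠ b → 0 ≤ φ a b) (x y a b : Fin n) :
    optCost φ x (swap a b y) ≤ optCost φ x y + (if y = a then 2 * optCost φ a b else 0) +
      (if y = b then 2 * optCost φ a b else 0) := by
  have hab := optCost_nonneg hnn a b
  rcases eq_or_ne y a with rfl | hya
  · rw [swap_apply_left, if_pos rfl]
    have := optCost_le_add hnn x y b
    split_ifs <;> linarith
  rcases eq_or_ne y b with rfl | hyb
  · rw [swap_apply_right, if_neg hya, if_pos rfl, optCost_comm a y]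
    linarith [optCost_le_add hnn x y a]
  · rw [swap_apply_of_ne_of_ne hya hyb, if_neg hya, if_neg hyb]
    linarith

theorem displacementCost_swap_mul_le (hnn : ∀ a b : Fin n, a ≠ b → 0 ≤ φ a b) (a b : Fin n)
    (ρ : Perm (Fin n)) :
    displacementCost φ (swap a b * ρ) ≤ displacementCost φ ρ + 4 * optCost φ a b := by
  calc displacementCost φ (swap a b * ρ)
      ≤ ∑ i, (optCost φ i (ρ i) + (if ρ i = a then 2 * optCost φ a b else 0) +
          (if ρ i = b then 2 * optCost φ a b else 0)) :=
        Finset.sum_le_sum fun i _ => optCost_swap_apply_le hnn i (ρ i) a b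
    _ = displacementCost φ ρ + 4 * optCost φ a b := by
        rw [Finset.sum_add_distrib, Finset.sum_add_distrib,
          Equiv.sum_comp ρ (fun j => if j = a then 2 * optCost φ a b else 0),
          Equiv.sum_comp ρ (fun j => if j = b then 2 * optCost φ a b else 0),
          Finset.sum_ite_eq', Finset.sum_ite_eq', if_pos (mem_univ _), if_pos (mem_univ _),
          displacementCost]
        ring

theorem displacementCost_le_four_mul_swapCost (hnn : ∀ a b : Fin n, a ≠ b → 0 ≤ φ a b)
    {l : List (Fin n × Fin n)} (hl : ∀ p ∈ l, p.1 ≠ p.2) :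
    displacementCost φ (swapProd l) ≤ 4 * swapCost φ l := by
  induction l with
  | nil => simp [displacementCost, swapProd_nil, swapCost_nil, optCost_self]
  | cons p l ih =>
    rw [List.forall_mem_cons] at hl
    rw [swapProd_cons, swapCost_cons]
    linarith [displacementCost_swap_mul_le hnn p.1 p.2 (swapProd l), optCost_le hnn hl.1, ih hl.2]

theorem displacementCost_le_four_mul_Mcost (hnn : ∀ a b : Fin n, a ≠ b → 0 ≤ φ a b)
    (π : Perm (Fin n)) : displacementCost φ π ≤ 4 * Mcost φ π := by
  have : displacementCost φ π / 4 ≤ Mcost φ π := le_Mcost fun l hl hπ => by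
    linarith [hπ ▸ displacementCost_le_four_mul_swapCost hnn hl]
  linarith

end Displacement

section CycleCost

variable {φ : Fin n → Fin n → ℝ}

theorem Sperm_one : Sperm φ 1 = 0 := by simp [Sperm]

theorem Sperm_of_isCycle {σ : Perm (Fin n)} (hσ : σ.IsCycle) : Sperm φ σ = Scost φ σ := by
  rw [Sperm, hσ.cycleFactorsFinset_eq_singleton, sum_singleton]

theorem Sperm_mul_of_disjoint {σ τ : Perm (Fin n)} (h : Disjoint σ τ) :
    Sperm φ (σ * τ) = Sperm φ σ + Sperm φ τ := by
  rw [Sperm, h.cycleFactorsFinset_mul_eq_union, sum_union h.disjoint_cycleFactorsFinset]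
  rfl

theorem Scost_le_sum_support (hnn : ∀ a b : Fin n, a ≠ b → 0 ≤ φ a b) (σ : Perm (Fin n)) :
    Scost φ σ ≤ ∑ i ∈ σ.support, optCost φ i (σ i) :=
  sub_le_self _ (Real.sSup_nonneg (by rintro _ ⟨i, -, rfl⟩; exact optCost_nonneg hnn _ _))

theorem Sperm_le_displacementCost (hnn : ∀ a b : Fin n, a ≠ b → 0 ≤ φ a b)
    (π : Perm (Fin n)) : Sperm φ π ≤ displacementCost φ π := by
  induction π using cycle_induction_on with
  | base_one => simp [Sperm_one, displacementCost, optCost_self]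
  | base_cycles σ hσ =>
    rw [Sperm_of_isCycle hσ]
    exact (Scost_le_sum_support hnn σ).trans
      (sum_le_univ_sum_of_nonneg fun i => optCost_nonneg hnn _ _)
  | induction_disjoint σ τ h _ hσ hτ =>
    rw [Sperm_mul_of_disjoint h, displacementCost_mul_of_disjoint h]
    exact add_le_add hσ hτ

theorem Equiv.Perm.IsCycle.exists_swapCost_optCost_eq_Scost {σ : Perm (Fin n)}
    (hσ : σ.IsCycle) :
    ∃ l : List (Fin n × Fin n), (∀ p ∈ l, p.1 ≠ p.2) ∧ l.length + 1 = #σ.support ∧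
      swapProd l = σ ∧ swapCost (optCost φ) l = Scost φ σ := by
  obtain ⟨x, hx, hmax⟩ :=
    σ.support.exists_max_image (fun i => optCost φ i (σ i)) hσ.nonempty_support
  obtain ⟨l, hnd, hset, hprod⟩ := hσ.exists_list_prod_swap_apply_eq hx
  have hmem : ∀ i ∈ l, i ∈ σ.support := fun i hi =>
    mem_of_mem_erase (hset ▸ List.mem_toFinset.2 hi)
  have hsup : sSup ((fun i => optCost φ i (σ i)) '' σ.support) = optCost φ x (σ x) :=
    IsGreatest.csSup_eq ⟨Set.mem_image_of_mem _ hx, Set.forall_mem_image.2 hmax⟩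
  refine ⟨l.map fun i => (i, σ i), ?_, ?_, ?_, ?_⟩
  · simpa using fun i hi => (mem_support.1 (hmem i hi)).symm
  · rw [List.length_map, ← List.toFinset_card_of_nodup hnd, hset, card_erase_add_one hx]
  · rwa [swapProd, List.map_map]
  · rw [Scost, hsup, ← sum_erase_add _ _ hx, add_sub_cancel_right, ← hset,
      List.sum_toFinset _ hnd, swapCost, List.map_map]
    rfl

theorem exists_swapCost_optCost_eq_Sperm (π : Perm (Fin n)) :
    ∃ l : List (Fin n × Fin n), (∀ p ∈ l, p.1 ≠ p.2) ∧
      l.length + #π.cycleFactorsFinset = #π.support ∧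
      swapProd l = π ∧ swapCost (optCost φ) l = Sperm φ π := by
  induction π using cycle_induction_on with
  | base_one => exact ⟨[], by simp, by simp, rfl, by rw [Sperm_one, swapCost_nil]⟩
  | base_cycles σ hσ =>
    obtain ⟨l, hl, hlen, hprod, hcost⟩ := hσ.exists_swapCost_optCost_eq_Scost (φ := φ)
    refine ⟨l, hl, ?_, hprod, by rw [Sperm_of_isCycle hσ, hcost]⟩
    rw [hσ.cycleFactorsFinset_eq_singleton, card_singleton, hlen]
  | induction_disjoint σ τ h _ hσ hτ =>
    obtain ⟨l₁, h₁, hlen₁, hprod₁, hcost₁⟩ := hσ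
    obtain ⟨l₂, h₂, hlen₂, hprod₂, hcost₂⟩ := hτ
    refine ⟨l₁ ++ l₂, List.forall_mem_append.2 ⟨h₁, h₂⟩, ?_,
      by rw [swapProd_append, hprod₁, hprod₂],
      by rw [swapCost_append, Sperm_mul_of_disjoint h, hcost₁, hcost₂]⟩
    rw [h.cycleFactorsFinset_mul_eq_union, card_union_of_disjoint h.disjoint_cycleFactorsFinset,
      h.card_support_mul, List.length_append]
    omega

theorem Lcost_le_Sperm (hnn : ∀ a b : Fin n, a ≠ b → 0 ≤ φ a b) (π : Perm (Fin n)) :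
    Lcost (optCost φ) (n - cNum π) π ≤ Sperm φ π := by
  obtain ⟨l, hl, hlen, hprod, hcost⟩ := exists_swapCost_optCost_eq_Sperm (φ := φ) π
  have hsupp : #π.support ≤ n := by simpa using card_le_univ π.support
  refine csInf_le ⟨0, ?_⟩ ⟨l, hl, by rw [cNum]; omega, hprod, hcost⟩
  rintro _ ⟨l', -, -, -, rfl⟩
  exact swapCost_nonneg fun p _ => optCost_nonneg hnn _ _

end CycleCost

theorem stmt15_general (φ : Fin n → Fin n → ℝ)
    (hnn : ∀ a b : Fin n, a ≠ b → 0 ≤ φ a b)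
    (π : Equiv.Perm (Fin n)) :
    Lcost (optCost φ) (n - cNum π) π ≤ Sperm φ π ∧
    Sperm φ π ≤ 4 * Mcost φ π :=
  ⟨Lcost_le_Sperm hnn π,
    (Sperm_le_displacementCost hnn π).trans (displacementCost_le_four_mul_Mcost hnn π)⟩

/-- for every permutation `π`, `L(π) ≤ S(π) ≤ 4 M_φ(π)`, where `L(π)` is
the minimum `φ*`-cost over decompositions of `π` with exactly `n − c(π)` transpositions. -/
theorem stmt15 (φ : Fin n → Fin n → ℝ)
    (hnn : ∀ a b : Fin n, a ≠ b → 0 ≤ φ a b)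
    (hsym : ∀ a b : Fin n, φ a b = φ b a)
    (π : Equiv.Perm (Fin n)) :
    Lcost (optCost φ) (n - cNum π) π ≤ Sperm φ π ∧
    Sperm φ π ≤ 4 * Mcost φ π :=
  stmt15_general φ hnn π
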